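/- arXiv:2211.15862 — 3 statements merged into one kernel-verified Lean document; each statement's English description precedes it below -/
import Mathlib

section
/- Let α = δ_0, δ_1, …, δ_m = β and γ be vectors in k² such that [γ, δ_i] ≠ 0 for all i. Then [α, β] = Σ_{i=0}^{m−1} [γ, α][γ, β][δ_i, δ_{i+1}] / ([γ, δ_i][γ, δ_{i+1}]). -/
/-!
With `α = δ₀` and `β = δₘ`, the Plücker relation
`[γ,β][δᵢ,δᵢ₊₁] = [γ,δᵢ][β,δᵢ₊₁] - [γ,δᵢ₊₁][β,δᵢ]` turns each summand into
`[γ,α]` times the difference `gᵢ₊₁ - gᵢ` of `gⱼ = [β,δⱼ]/[γ,δⱼ]`, so the sum telescopes to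
`[γ,α](g_m - g_0) = [γ,α](0 - [β,α]/[γ,α]) = [α,β]`.
-/
open Finset

def bracket {k : Type*} [CommRing k] (u v : Fin 2 → k) : k := u 0 * v 1 - v 0 * u 1

theorem Fin.sum_succ_sub_castSucc {M : Type*} [AddCommGroup M] {m : ℕ} (g : Fin (m + 1) → M) :
    ∑ i : Fin m, (g i.succ - g i.castSucc) = g (Fin.last m) - g 0 := by
  induction m with
  | zero => simp
  | succ n ih =>
    rw [Fin.sum_univ_castSucc]
    simp only [Fin.succ_castSucc]
    rw [ih (fun i => g i.castSucc)]
    simp only [Fin.succ_last, Fin.castSucc_zero]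
    abel

theorem bracket_self {k : Type*} [CommRing k] (u : Fin 2 → k) : bracket u u = 0 := by
  unfold bracket; ring

theorem bracket_swap {k : Type*} [CommRing k] (u v : Fin 2 → k) : bracket v u = -bracket u v := by
  unfold bracket; ring

theorem bracket_plucker {k : Type*} [CommRing k] (γ u v w : Fin 2 → k) :
    bracket γ v * bracket u w - bracket γ w * bracket u v = bracket γ u * bracket v w := by
  unfold bracket; ring

theorem bracket_div_sub_bracket_div {k : Type*} [Field k] {γ v w : Fin 2 → k} (u : Fin 2 → k)
    (hv : bracket γ v ≠ 0) (hw : bracket γ w ≠ 0) :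
    bracket u w / bracket γ w - bracket u v / bracket γ v =
      bracket γ u * bracket v w / (bracket γ v * bracket γ w) := by
  rw [div_sub_div _ _ hw hv, ← bracket_plucker γ u v w]
  ring

/-- Telescoping bracket identity: if `α = δ₀, δ₁, …, δ_m = β` and `γ` are vectors in `k²`
with `[γ, δᵢ] ≠ 0` for all `i`, then
`[α,β] = Σ_{i=0}^{m-1} [γ,α][γ,β][δᵢ,δ_{i+1}] / ([γ,δᵢ][γ,δ_{i+1}])`. -/
theorem bracket_telescope {k : Type*} [Field k] (m : ℕ) (δ : Fin (m + 1) → Fin 2 → k)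
    (γ : Fin 2 → k) (hnz : ∀ i, bracket γ (δ i) ≠ 0) :
    bracket (δ 0) (δ (Fin.last m)) =
      ∑ i : Fin m,
        bracket γ (δ 0) * bracket γ (δ (Fin.last m)) * bracket (δ i.castSucc) (δ i.succ) /
          (bracket γ (δ i.castSucc) * bracket γ (δ i.succ)) := by
  set α := δ 0
  set β := δ (Fin.last m)
  calc bracket α β = bracket γ α * (bracket β β / bracket γ β - bracket β α / bracket γ α) := by
        rw [bracket_self, zero_div, zero_sub, mul_neg, mul_div_cancel₀ _ (hnz 0), bracket_swap]
    _ = bracket γ α * ∑ i : Fin m, (bracket β (δ i.succ) / bracket γ (δ i.succ)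
          - bracket β (δ i.castSucc) / bracket γ (δ i.castSucc)) := by
        rw [Fin.sum_succ_sub_castSucc (fun j => bracket β (δ j) / bracket γ (δ j))]
    _ = _ := by
        rw [mul_sum]
        refine sum_congr rfl fun i _ => ?_
        rw [bracket_div_sub_bracket_div β (hnz _) (hnz _)]
        ring
end

section
/- Under the common-factor hypothesis f_n = f_{n−1}·h, f_{n−2} = f_{n−3}·h with h linear, the discriminant-resultants satisfy DR_{n,r}(f_n, f_{n−2}) = (−1)^{n−1} res(h, f_{n−1})² · DR_{n−1,r}(f_{n−1}, f_{n−3}) for all 0 ≤ r ≤ n−1. -/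
open Polynomial Finset

/-- The resultant of two binary forms of (formal) degrees `d` and `e`, given by their
dehomogenizations. -/
noncomputable def res {k : Type*} [CommRing k] (d e : ℕ) (p q : Polynomial k) : k :=
  (-1 : k) ^ (d * e) *
    Matrix.det (Matrix.of fun i j : Fin (d + e) =>
      if (i : ℕ) < e then
        (if (i : ℕ) ≤ (j : ℕ) ∧ (j : ℕ) ≤ d + (i : ℕ) then
          p.coeff (d + (i : ℕ) - (j : ℕ)) else 0)
      else
        (if (i : ℕ) - e ≤ (j : ℕ) ∧ (j : ℕ) ≤ (i : ℕ) then
          q.coeff ((i : ℕ) - (j : ℕ)) else 0))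

/-- The numerator of the discriminant-resultant generating polynomial:
`res(f_n, x ∂ₓ f_n + t·x·y·f_{n-2})`, computed over `k[t]`. -/
noncomputable def DRnum {k : Type*} [CommRing k] (n : ℕ) (p q : Polynomial k) :
    Polynomial k :=
  res n n (p.map (Polynomial.C : k →+* Polynomial k))
    (Polynomial.X * (Polynomial.derivative p).map (Polynomial.C : k →+* Polynomial k) +
      Polynomial.C (Polynomial.X : Polynomial k) * Polynomial.X *
        (q.map (Polynomial.C : k →+* Polynomial k)))

/-- The `r`-th discriminant-resultant `DR_{n,r}`: the coefficient of `t^r` in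
`res(f_n, x ∂ₓ f_n + t·x·y·f_{n-2}) / (a₀ aₙ)`. -/
noncomputable def DR {k : Type*} [Field k] (n r : ℕ) (p q : Polynomial k) : k :=
  (DRnum n p q).coeff r / (p.coeff 0 * p.coeff n)

/- Over `k[t]`, with `F, H, G` the images of `f, h, g` and `Q_f = x F' + t x G`, the second
argument of the resultant defining `DR_n` is `Q = x (FH)' + t x G H = H Q_f + F (x H')`. Hence `Q ≡ H Q_f`
modulo `F` and `Q ≡ u x F` modulo `H`, and multiplicativity of the resultant gives
`Res(FH, Q) = ± Res(h, f)² · u v · Res(F, Q_f)`. The factor `u v` cancels against the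
normalisation, since the extreme coefficients of `f h` are `a'₀ v` and `a'ₙ₋₁ u`. -/

theorem neg_one_pow_mul_self {M : Type*} [Monoid M] [HasDistribNeg M] (n : ℕ) :
    (-1 : M) ^ (n * n) = (-1) ^ n := by
  rcases Nat.even_or_odd n with hn | hn
  · rw [hn.neg_one_pow, (hn.mul_right n).neg_one_pow]
  · rw [hn.neg_one_pow, (hn.mul hn).neg_one_pow]

/- `res` lists coefficients from the top degree down; reversing both rows and columns turns its
matrix into the transpose of `sylvester p q d e`. -/
theorem res_eq_resultant {R : Type*} [CommRing R] (d e : ℕ) (p q : R[X]) :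
    res d e p q = (-1) ^ (d * e) * p.resultant q d e := by
  rw [res, resultant, ← Matrix.det_transpose (sylvester p q d e),
    ← Matrix.det_submatrix_equiv_self Fin.revPerm (sylvester p q d e).transpose]
  congr 2
  ext i j
  simp only [Matrix.of_apply, Matrix.submatrix_apply, Matrix.transpose_apply, sylvester,
    Fin.revPerm_apply, Fin.addCases, Fin.val_rev, Set.mem_Icc, Fin.val_subNat, Fin.val_castLT,
    Fin.val_cast, eq_rec_constant]
  have hi := i.isLt
  have hj := j.isLt
  split_ifs <;> first | rfl | omega | (congr 1; omega)

namespace Polynomial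

variable {R : Type*} [CommRing R]

theorem resultant_mul_right_of_natDegree_le {f g₁ g₂ : R[X]} {m n₁ n₂ : ℕ}
    (hf : f.natDegree ≤ m) (h₁ : g₁.natDegree ≤ n₁) (h₂ : g₂.natDegree ≤ n₂) :
    f.resultant (g₁ * g₂) m (n₁ + n₂) = f.resultant g₁ m n₁ * f.resultant g₂ m n₂ := by
  obtain ⟨k₁, rfl⟩ := Nat.exists_eq_add_of_le h₁
  obtain ⟨k₂, rfl⟩ := Nat.exists_eq_add_of_le h₂
  rw [add_add_add_comm, resultant_add_right_deg (hg := natDegree_mul_le),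
    resultant_mul_right _ _ _ _ hf, resultant_add_right_deg (hg := le_rfl),
    resultant_add_right_deg (hg := le_rfl), pow_add]
  ring

theorem resultant_mul_left_of_natDegree_le {f₁ f₂ g : R[X]} {m₁ m₂ n : ℕ}
    (h₁ : f₁.natDegree ≤ m₁) (h₂ : f₂.natDegree ≤ m₂) (hg : g.natDegree ≤ n) :
    (f₁ * f₂).resultant g (m₁ + m₂) n = f₁.resultant g m₁ n * f₂.resultant g m₂ n := by
  rw [resultant_comm (f₁ * f₂), resultant_mul_right_of_natDegree_le hg h₁ h₂,
    resultant_comm f₁, resultant_comm f₂, add_mul, pow_add]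
  ring

theorem resultant_C_mul_X_add_C_X_mul_C (a b c : R) :
    (C a * X + C b).resultant (X * C c) 1 1 = -(b * c) := by
  simp [resultant, sylvester, Matrix.det_fin_two, Fin.addCases]

end Polynomial

section DRnum

variable {R : Type*} [CommRing R]

noncomputable def drPoly (p q : R[X]) : R[X][X] :=
  X * (derivative p).map C + C X * X * q.map C

theorem DRnum_eq_res_drPoly (n : ℕ) (p q : R[X]) :
    DRnum n p q = res n n (p.map C) (drPoly p q) := rfl

theorem natDegree_drPoly_le {p q : R[X]} {m : ℕ} (hp : p.natDegree ≤ m)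
    (hq : q.natDegree + 1 ≤ m) : (drPoly p q).natDegree ≤ m := by
  have hp' : ((derivative p).map (C : R →+* R[X])).natDegree ≤ m - 1 :=
    natDegree_map_le.trans ((natDegree_derivative_le p).trans (by omega))
  have hq' : (q.map (C : R →+* R[X])).natDegree ≤ m - 1 := natDegree_map_le.trans (by omega)
  refine (natDegree_add_le _ _).trans (max_le ?_ ?_)
  · exact natDegree_mul_le.trans (by have := natDegree_X_le (R := R[X]); omega)
  · refine natDegree_mul_le.trans ?_
    have := natDegree_C_mul_le (X : R[X]) (X : R[X][X])
    have := natDegree_X_le (R := R[X])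
    omega

theorem drPoly_mul_right (p q h : R[X]) :
    drPoly (p * h) (q * h) =
      h.map C * drPoly p q + p.map C * (X * (derivative h).map C) := by
  simp only [drPoly, derivative_mul, Polynomial.map_mul, Polynomial.map_add]
  ring

theorem DRnum_mul_linear {m : ℕ} (u v : R) {f g : R[X]}
    (hf : f.natDegree ≤ m) (hg : g.natDegree + 1 ≤ m) :
    DRnum (m + 1) (f * (C u * X + C v)) (g * (C u * X + C v)) =
      C ((-1) ^ m * u * v * res 1 m (C u * X + C v) f ^ 2) * DRnum m f g := by
  set h : R[X] := C u * X + C v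
  set F := f.map (C : R →+* R[X])
  set H := h.map (C : R →+* R[X])
  have hh : h.natDegree ≤ 1 := natDegree_linear_le
  have hH : H.natDegree ≤ 1 := natDegree_map_le.trans hh
  have hF : F.natDegree ≤ m := natDegree_map_le.trans hf
  have hQf : (drPoly f g).natDegree ≤ m := natDegree_drPoly_le hf hg
  have hQ : (drPoly (f * h) (g * h)).natDegree ≤ m + 1 :=
    natDegree_drPoly_le (natDegree_mul_le.trans (by omega))
      (by have := natDegree_mul_le (p := g) (q := h); omega)
  have hXu : (X * C (C u) : R[X][X]).natDegree ≤ 1 :=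
    (natDegree_mul_C_le _ _).trans natDegree_X_le
  have hQ_eq : drPoly (f * h) (g * h) = H * drPoly f g + F * (X * C (C u)) := by
    rw [drPoly_mul_right, show (derivative h).map C = C (C u) by simp [h]]
  have hHF : H.resultant F 1 m = C (h.resultant f 1 m) := resultant_map_map _ _ _ _ _
  have hQF : F.resultant (drPoly (f * h) (g * h)) m (m + 1) =
      (-1) ^ m * C (h.resultant f 1 m) * F.resultant (drPoly f g) m m := by
    rw [hQ_eq, resultant_add_mul_right _ _ _ _ _ (by omega) hF, add_comm m 1,
      resultant_mul_right_of_natDegree_le hF hH hQf, resultant_comm F H, hHF, mul_one]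
  have hQH : H.resultant (drPoly (f * h) (g * h)) 1 (m + 1) =
      C (h.resultant f 1 m) * -C (v * u) := by
    rw [hQ_eq, add_comm, resultant_add_mul_right _ _ _ _ _ (by omega) hH,
      resultant_mul_right_of_natDegree_le hH hF hXu, hHF,
      show H = C (C u) * X + C (C v) by simp [H, h], resultant_C_mul_X_add_C_X_mul_C,
      ← C_mul]
  rw [DRnum_eq_res_drPoly, DRnum_eq_res_drPoly, res_eq_resultant, res_eq_resultant,
    res_eq_resultant, Polynomial.map_mul, resultant_mul_left_of_natDegree_le hF hH hQ, hQF, hQH,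
    neg_one_pow_mul_self, neg_one_pow_mul_self, one_mul]
  have hsq : ((-1 : R[X]) ^ m) ^ 2 = 1 := by rw [← pow_mul, mul_comm, pow_mul]; simp
  simp only [map_mul, map_pow, map_neg, map_one]
  linear_combination (-(C u * C v * C (h.resultant f 1 m) ^ 2 * F.resultant (drPoly f g) m m *
    ((-1 : R[X]) ^ m) ^ 2)) * hsq

end DRnum

theorem DR_common_factor_general {k : Type*} [Field k] (n r : ℕ) (hn : 3 ≤ n)
    (u v : k) (h f g : Polynomial k) (hh : h = C u * X + C v)
    (hf : f.natDegree ≤ n - 1) (hg : g.natDegree ≤ n - 3)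
    (ha : (f * h).coeff 0 * (f * h).coeff n ≠ 0) :
    DR n r (f * h) (g * h) =
      (-1 : k) ^ (n - 1) * (res 1 (n - 1) h f) ^ 2 * DR (n - 1) r f g := by
  obtain ⟨m, rfl⟩ : ∃ m, n = m + 1 := ⟨n - 1, by omega⟩
  subst hh
  have hlow : (f * (C u * X + C v)).coeff 0 = f.coeff 0 * v := by simp
  have htop : (f * (C u * X + C v)).coeff (m + 1) = f.coeff m * u := by
    simp [mul_add, ← mul_assoc, coeff_mul_X, coeff_eq_zero_of_natDegree_lt (p := f) (n := m + 1)
      (by omega)]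
  rw [hlow, htop] at ha
  have hu : u ≠ 0 := by rintro rfl; simp at ha
  have hv : v ≠ 0 := by rintro rfl; simp at ha
  simp only [Nat.add_sub_cancel] at hf ⊢
  rw [DR, DR, DRnum_mul_linear u v hf (by omega), coeff_C_mul, hlow, htop]
  field_simp

/-- Under the common-factor hypothesis `f_n = f_{n-1}·h`, `f_{n-2} = f_{n-3}·h` with `h`
linear, `DR_{n,r}(f_n, f_{n-2}) = (-1)^{n-1} res(h, f_{n-1})² · DR_{n-1,r}(f_{n-1}, f_{n-3})`
for all `0 ≤ r ≤ n-1`. -/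
theorem DR_common_factor {k : Type*} [Field k] [CharZero k] (n r : ℕ) (hn : 3 ≤ n)
    (hr : r ≤ n - 1) (u v : k) (h f g : Polynomial k) (hh : h = C u * X + C v)
    (hf : f.natDegree ≤ n - 1) (hg : g.natDegree ≤ n - 3)
    (ha' : f.coeff 0 * f.coeff (n - 1) ≠ 0)
    (ha : (f * h).coeff 0 * (f * h).coeff n ≠ 0) :
    DR n r (f * h) (g * h) =
      (-1 : k) ^ (n - 1) * (res 1 (n - 1) h f) ^ 2 * DR (n - 1) r f g :=
  DR_common_factor_general n r hn u v h f g hh hf hg ha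
end

section
/- Let L be a Laurent polynomial ring over a field k with a monomial ordering ⪯ (total order on Laurent monomials compatible with multiplication). If {f_s}_{s∈S} is a finite family of nonzero Laurent polynomials whose leading monomials lm_⪯(f_s) are multiplicatively independent (the map ⊕_{s∈S} ℤ → L, (a_s) ↦ ∏ lm(f_s)^{a_s}, is injective), then the f_s are algebraically independent over k. -/
/-!
Writing `φ d = ∑ₛ d s • m s` for an exponent vector `d : S →₀ ℕ`, the leading exponent is
additive under multiplication (the order is cancellative and `k` has no zero divisors), so the
image of the monomial `c • X^d` under evaluation at `f` has leading exponent `φ d`. By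
independence of the `m s`, `φ` is injective, hence the terms of `p(f)` for a nonzero polynomial
`p` have pairwise distinct leading exponents, and the largest one cannot cancel.
-/

open Finset

namespace AddMonoidAlgebra

variable {R A : Type*}

section Semiring

variable [Semiring R] [LinearOrder A] {p q : R[A]} {a b : A}

def IsLeadingExponent (p : R[A]) (a : A) : Prop :=
  a ∈ p.coeff.support ∧ ∀ x ∈ p.coeff.support, x ≤ a

theorem IsLeadingExponent.ne_zero (hp : p.IsLeadingExponent a) : p ≠ 0 := by
  rintro rfl
  exact Finsupp.notMem_support_iff.2 rfl hp.1

theorem IsLeadingExponent.supDegree_eq (hp : p.IsLeadingExponent a) :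
    p.supDegree WithBot.some = a :=
  supDegree_eq_of_isMaxOn hp.1 fun x hx => WithBot.coe_le_coe.2 (hp.2 x hx)

theorem isLeadingExponent_single {r : R} (hr : r ≠ 0) : (single a r).IsLeadingExponent a := by
  simp [IsLeadingExponent, Finsupp.support_single _ hr]

theorem isLeadingExponent_one [Zero A] [Nontrivial R] : (1 : R[A]).IsLeadingExponent 0 :=
  isLeadingExponent_single one_ne_zero

variable [AddCommMonoid A] [IsOrderedCancelAddMonoid A]

theorem coeff_mul_add_of_forall_le (hp : ∀ x ∈ p.coeff.support, x ≤ a)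
    (hq : ∀ y ∈ q.coeff.support, y ≤ b) : (p * q).coeff (a + b) = p.coeff a * q.coeff b := by
  simp_rw [coeff_mul, Finsupp.sum]
  rw [Finset.sum_eq_single a, Finset.sum_eq_single b, if_pos rfl]
  · exact fun y _ hne => if_neg fun he => hne (add_left_cancel he)
  · intro h
    rw [if_pos rfl, Finsupp.notMem_support_iff.1 h, mul_zero]
  · refine fun x hx hne => Finset.sum_eq_zero fun y hy => if_neg fun he => ?_
    exact (add_lt_add_of_lt_of_le ((hp x hx).lt_of_ne hne) (hq y hy)).ne he
  · refine fun h => Finset.sum_eq_zero fun y _ => ite_eq_right_iff.mpr fun _ => ?_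
    rw [Finsupp.notMem_support_iff.1 h, zero_mul]

theorem IsLeadingExponent.mul [NoZeroDivisors R] (hp : p.IsLeadingExponent a)
    (hq : q.IsLeadingExponent b) : (p * q).IsLeadingExponent (a + b) := by
  refine ⟨?_, fun x hx => ?_⟩
  · rw [Finsupp.mem_support_iff, coeff_mul_add_of_forall_le hp.2 hq.2]
    exact mul_ne_zero (Finsupp.mem_support_iff.1 hp.1) (Finsupp.mem_support_iff.1 hq.1)
  · obtain ⟨x₁, hx₁, x₂, hx₂, rfl⟩ := Finset.mem_add.1 (support_coeff_mul_subset p q hx)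
    exact add_le_add (hp.2 x₁ hx₁) (hq.2 x₂ hx₂)

theorem IsLeadingExponent.pow [NoZeroDivisors R] [Nontrivial R] (hp : p.IsLeadingExponent a)
    (n : ℕ) : (p ^ n).IsLeadingExponent (n • a) := by
  induction n with
  | zero => simpa using isLeadingExponent_one
  | succ n ih => rw [pow_succ, succ_nsmul]; exact ih.mul hp

end Semiring

section CommSemiring

variable [CommSemiring R] [NoZeroDivisors R] [AddCommMonoid A] [LinearOrder A]
  [IsOrderedCancelAddMonoid A]

theorem IsLeadingExponent.prod [Nontrivial R] {ι : Type*} {s : Finset ι} {g : ι → R[A]}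
    {a : ι → A} (hg : ∀ i ∈ s, (g i).IsLeadingExponent (a i)) :
    (∏ i ∈ s, g i).IsLeadingExponent (∑ i ∈ s, a i) := by
  classical
  induction s using Finset.induction_on with
  | empty => simpa using isLeadingExponent_one
  | insert i s hi ih =>
    rw [prod_insert hi, sum_insert hi]
    exact (hg i (mem_insert_self i s)).mul (ih fun j hj => hg j (mem_insert_of_mem hj))

theorem IsLeadingExponent.aeval_monomial {S : Type*} {f : S → R[A]} {m : S → A}
    (hf : ∀ s, (f s).IsLeadingExponent (m s)) (d : S →₀ ℕ) {c : R} (hc : c ≠ 0) :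
    (MvPolynomial.aeval f (MvPolynomial.monomial d c)).IsLeadingExponent
      (d.sum fun s e => e • m s) := by
  have : Nontrivial R := ⟨⟨c, 0, hc⟩⟩
  rw [MvPolynomial.aeval_monomial, ← zero_add (d.sum _)]
  exact (isLeadingExponent_single hc).mul (IsLeadingExponent.prod fun s _ => (hf s).pow _)

end CommSemiring

theorem algebraicIndependent_of_isLeadingExponent [CommRing R] [NoZeroDivisors R]
    [AddCommMonoid A] [LinearOrder A] [IsOrderedCancelAddMonoid A] {S : Type*} {f : S → R[A]}
    {m : S → A} (hf : ∀ s, (f s).IsLeadingExponent (m s))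
    (hm : Function.Injective fun d : S →₀ ℕ => d.sum fun s e => e • m s) :
    AlgebraicIndependent R f := by
  rw [algebraicIndependent_iff]
  intro p hp
  by_contra hp0
  have hlead (d) (hd : d ∈ p.support) :=
    IsLeadingExponent.aeval_monomial hf d (MvPolynomial.mem_support_iff.1 hd)
  rw [p.as_sum, map_sum] at hp
  refine sum_ne_zero_of_injOn_supDegree (D := WithBot.some) (MvPolynomial.support_nonempty.2 hp0)
    (fun d hd => (hlead d hd).ne_zero) (fun d hd d' hd' he => hm ?_) hp
  simpa [(hlead d hd).supDegree_eq, (hlead d' hd').supDegree_eq] using he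

end AddMonoidAlgebra

theorem Finsupp.injective_sum_nsmul_of_injective_sum_zsmul {S A : Type*} [AddCommGroup A]
    {m : S → A} (hm : Function.Injective fun a : S →₀ ℤ => a.sum fun s c => c • m s) :
    Function.Injective fun d : S →₀ ℕ => d.sum fun s e => e • m s := by
  intro d d' he
  refine Finsupp.mapRange_injective (Nat.cast : ℕ → ℤ) Nat.cast_zero Nat.cast_injective (hm ?_)
  simpa [Finsupp.sum_mapRange_index, natCast_zsmul] using he

theorem algIndep_of_mulIndep_leadingMonomials_general {k : Type*} [Field k] (N : ℕ)
    (S : Type)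
    (lin : LinearOrder (Fin N →₀ ℤ))
    (hcomp : ∀ a b c : Fin N →₀ ℤ, lin.le a b → lin.le (a + c) (b + c))
    (f : S → AddMonoidAlgebra k (Fin N →₀ ℤ))
    (m : S → (Fin N →₀ ℤ))
    (hmem : ∀ s, m s ∈ (f s).coeff.support)
    (hmax : ∀ s, ∀ m' ∈ (f s).coeff.support, lin.le m' (m s))
    (hind : Function.Injective fun a : S →₀ ℤ => a.sum fun s c => c • m s) :
    AlgebraicIndependent k f := by
  -- `Fin N →₀ ℤ` already carries the pointwise order, so the order `lin` is passed explicitly.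
  have hord : @IsOrderedAddMonoid (Fin N →₀ ℤ) _ lin.toPreorder :=
    @IsOrderedAddMonoid.mk _ _ lin.toPreorder (fun a b h c => hcomp a b c h)
      (fun a b h c => by simpa only [add_comm c] using hcomp a b c h)
  exact @AddMonoidAlgebra.algebraicIndependent_of_isLeadingExponent _ _ _ _ _ lin
    (@IsOrderedAddMonoid.toIsOrderedCancelAddMonoid _ _ lin.toPreorder hord) _ f m
    (fun s => ⟨hmem s, hmax s⟩) (Finsupp.injective_sum_nsmul_of_injective_sum_zsmul hind)

/-- In the Laurent polynomial ring `L = k[x₁^{±1},…,x_N^{±1}]`, realized as the monoid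
algebra of the group of Laurent monomials `Fin N →₀ ℤ`, let `⪯` be a monomial ordering
(a linear order compatible with multiplication of monomials, i.e. with addition of
exponent vectors).  If `{f_s}_{s ∈ S}` is a finite family of nonzero Laurent polynomials
whose leading monomials `m s` are multiplicatively independent (the map
`⊕_{s∈S} ℤ → L`, `(a_s) ↦ ∏ lm(f_s)^{a_s}`, i.e. `(a_s) ↦ Σ a_s • m s` on exponent
vectors, is injective), then the `f_s` are algebraically independent over `k`. -/
theorem algIndep_of_mulIndep_leadingMonomials {k : Type*} [Field k] (N : ℕ)
    (S : Type) [Fintype S]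
    (lin : LinearOrder (Fin N →₀ ℤ))
    (hcomp : ∀ a b c : Fin N →₀ ℤ, lin.le a b → lin.le (a + c) (b + c))
    (f : S → AddMonoidAlgebra k (Fin N →₀ ℤ))
    (hf : ∀ s, f s ≠ 0)
    (m : S → (Fin N →₀ ℤ))
    (hmem : ∀ s, m s ∈ (f s).coeff.support)
    (hmax : ∀ s, ∀ m' ∈ (f s).coeff.support, lin.le m' (m s))
    (hind : Function.Injective fun a : S →₀ ℤ => a.sum fun s c => c • m s) :
    AlgebraicIndependent k f :=
  algIndep_of_mulIndep_leadingMonomials_general N S lin hcomp f m hmem hmax hind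
end
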